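/- arXiv:math/0010199 — 5 statements merged into one kernel-verified Lean document; each statement's English description precedes it below -/
import Mathlib

section
/- Let E be a nontrivial finite-dimensional real inner product space and let ρ and A be self-adjoint endomorphisms of E. Assume: (i) ρ is positive definite; (ii) for every unit vector v ∈ E one has 2⟪ρ v, v⟫ < trace ρ (i.e. 2ρ − (trace ρ)·id is negative definite); (iii) for all orthonormal vectors v, w ∈ E one has ⟪A v, v⟫ + ⟪A w, w⟫ ≥ 0. Then trace (ρ ∘ A) ≥ 0, and trace (ρ ∘ A) = 0 holds if and only if A = 0. -/
open RealInnerProductSpace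

/-!
Diagonalize `A` in an orthonormal eigenbasis `bᵢ` with eigenvalues `aᵢ`. Then
`tr (ρ ∘ A) = ∑ aᵢ rᵢ` with `rᵢ = ⟪ρ bᵢ, bᵢ⟫ > 0` and `2 rᵢ < ∑ rⱼ = tr ρ`, while `aᵢ + aⱼ ≥ 0`
for `i ≠ j`. So at most one eigenvalue `aₘ` is negative, and then `aᵢ ≥ -aₘ` for all `i ≠ m`,
whence `∑ aᵢ rᵢ ≥ (-aₘ) (∑ rⱼ - 2 rₘ) > 0`. If no eigenvalue is negative, `∑ aᵢ rᵢ` is a sum of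
nonnegative terms, vanishing only when every `aᵢ` does.
-/

open Finset in
theorem sum_mul_pos_of_pairwise_add_nonneg {ι : Type*} [Fintype ι] {a r : ι → ℝ} {m : ι}
    (hr : ∀ i, 0 ≤ r i) (ha : ∀ i j, i ≠ j → 0 ≤ a i + a j) (hm : a m < 0)
    (hrm : 2 * r m < ∑ i, r i) : 0 < ∑ i, a i * r i := by
  classical
  calc 0 < -a m * (∑ i, r i - 2 * r m) := mul_pos (neg_pos.mpr hm) (sub_pos.mpr hrm)
    _ = a m * r m + ∑ i ∈ univ.erase m, -a m * r i := by
      rw [← mul_sum, sum_erase_eq_sub (mem_univ m)]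
      ring
    _ ≤ a m * r m + ∑ i ∈ univ.erase m, a i * r i := by
      gcongr with i hi
      · exact hr i
      · linarith [ha i m (ne_of_mem_erase hi)]
    _ = ∑ i, a i * r i := add_sum_erase _ (fun i => a i * r i) (mem_univ m)

theorem sum_mul_nonneg_and_eq_zero_iff_of_pairwise_add_nonneg {ι : Type*} [Fintype ι]
    {a r : ι → ℝ} (hr : ∀ i, 0 < r i) (ha : ∀ i j, i ≠ j → 0 ≤ a i + a j)
    (hκ : ∀ i, 2 * r i < ∑ j, r j) :
    0 ≤ ∑ i, a i * r i ∧ (∑ i, a i * r i = 0 ↔ a = 0) := by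
  by_cases hneg : ∃ m, a m < 0
  · obtain ⟨m, hm⟩ := hneg
    have hpos := sum_mul_pos_of_pairwise_add_nonneg (fun i => (hr i).le) ha hm (hκ m)
    exact ⟨hpos.le, iff_of_false hpos.ne' fun h => hm.ne (congrFun h m)⟩
  · push Not at hneg
    have hterm : ∀ i ∈ Finset.univ, 0 ≤ a i * r i := fun i _ => mul_nonneg (hneg i) (hr i).le
    refine ⟨Finset.sum_nonneg hterm, ?_⟩
    simp [Finset.sum_eq_zero_iff_of_nonneg hterm, (hr _).ne', funext_iff]

namespace LinearMap.IsSymmetric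

variable {𝕜 E : Type*} [RCLike 𝕜] [NormedAddCommGroup E] [InnerProductSpace 𝕜 E]
  [FiniteDimensional 𝕜 E] {A : E →ₗ[𝕜] E} {n : ℕ}

theorem inner_apply_eigenvectorBasis_self (hA : A.IsSymmetric) (hn : Module.finrank 𝕜 E = n)
    (i : Fin n) :
    inner 𝕜 (A (hA.eigenvectorBasis hn i)) (hA.eigenvectorBasis hn i) = hA.eigenvalues hn i := by
  simp [inner_smul_left, (hA.eigenvectorBasis hn).orthonormal.1 i]

theorem trace_comp_eq_sum_eigenvalues_mul (hA : A.IsSymmetric) (hn : Module.finrank 𝕜 E = n)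
    (T : E →ₗ[𝕜] E) :
    LinearMap.trace 𝕜 E (T ∘ₗ A) = ∑ i, hA.eigenvalues hn i *
      inner 𝕜 (hA.eigenvectorBasis hn i) (T (hA.eigenvectorBasis hn i)) := by
  simp [LinearMap.trace_eq_sum_inner _ (hA.eigenvectorBasis hn), inner_smul_right]

theorem eq_zero_iff_eigenvalues_eq_zero (hA : A.IsSymmetric) (hn : Module.finrank 𝕜 E = n) :
    A = 0 ↔ hA.eigenvalues hn = 0 := by
  rw [← (LinearMap.toMatrix (hA.eigenvectorBasis hn).toBasis
    (hA.eigenvectorBasis hn).toBasis).map_eq_zero_iff, hA.toMatrix_eigenvectorBasis]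
  simp [funext_iff]

end LinearMap.IsSymmetric

theorem trace_comp_nonneg_of_pairwise_general (E : Type*) [NormedAddCommGroup E]
    [InnerProductSpace ℝ E] [FiniteDimensional ℝ E]
    (ρ A : E →ₗ[ℝ] E) (hA : LinearMap.IsSymmetric A)
    (hρpos : ∀ v : E, v ≠ 0 → 0 < ⟪ρ v, v⟫)
    (hρκ : ∀ v : E, ‖v‖ = 1 → 2 * ⟪ρ v, v⟫ < LinearMap.trace ℝ E ρ)
    (hApair : ∀ v w : E, ‖v‖ = 1 → ‖w‖ = 1 → ⟪v, w⟫ = 0 → ⟪A v, v⟫ + ⟪A w, w⟫ ≥ 0) :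
    (LinearMap.trace ℝ E (ρ ∘ₗ A) ≥ 0) ∧
      (LinearMap.trace ℝ E (ρ ∘ₗ A) = 0 ↔ A = 0) := by
  set b := hA.eigenvectorBasis rfl
  set a := hA.eigenvalues rfl
  set r : Fin (Module.finrank ℝ E) → ℝ := fun i => ⟪ρ (b i), b i⟫
  have hr : ∀ i, 0 < r i := fun i => hρpos _ (b.orthonormal.ne_zero i)
  have htrace : LinearMap.trace ℝ E ρ = ∑ i, r i := by
    simp [r, LinearMap.trace_eq_sum_inner ρ b, real_inner_comm]
  have hκ : ∀ i, 2 * r i < ∑ j, r j := fun i => htrace ▸ hρκ (b i) (b.orthonormal.1 i)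
  have hpair : ∀ i j, i ≠ j → 0 ≤ a i + a j := fun i j hij => by
    have h := hApair (b i) (b j) (b.orthonormal.1 i) (b.orthonormal.1 j) (b.orthonormal.2 hij)
    rwa [hA.inner_apply_eigenvectorBasis_self, hA.inner_apply_eigenvectorBasis_self] at h
  rw [hA.trace_comp_eq_sum_eigenvalues_mul rfl, hA.eq_zero_iff_eigenvalues_eq_zero rfl]
  simp only [RCLike.ofReal_real_eq_id, id, real_inner_comm (ρ _)]
  exact sum_mul_nonneg_and_eq_zero_iff_of_pairwise_add_nonneg hr hpair hκ

/-- If `ρ` is positive definite, `2ρ - (tr ρ)·id` is negative definite, and the sum of the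
values of `A` on any two orthonormal vectors is nonnegative, then `tr (ρ ∘ A) ≥ 0`, with
equality iff `A = 0`. -/
theorem trace_comp_nonneg_of_pairwise (E : Type*) [NormedAddCommGroup E]
    [InnerProductSpace ℝ E] [FiniteDimensional ℝ E] [Nontrivial E]
    (ρ A : E →ₗ[ℝ] E) (hρ : LinearMap.IsSymmetric ρ) (hA : LinearMap.IsSymmetric A)
    (hρpos : ∀ v : E, v ≠ 0 → 0 < ⟪ρ v, v⟫)
    (hρκ : ∀ v : E, ‖v‖ = 1 → 2 * ⟪ρ v, v⟫ < LinearMap.trace ℝ E ρ)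
    (hApair : ∀ v w : E, ‖v‖ = 1 → ‖w‖ = 1 → ⟪v, w⟫ = 0 → ⟪A v, v⟫ + ⟪A w, w⟫ ≥ 0) :
    (LinearMap.trace ℝ E (ρ ∘ₗ A) ≥ 0) ∧
      (LinearMap.trace ℝ E (ρ ∘ₗ A) = 0 ↔ A = 0) :=
  trace_comp_nonneg_of_pairwise_general E ρ A hA hρpos hρκ hApair
end

section
/- Let n be a natural number and q, a : Fin n → ℝ families of real numbers such that: (i) q i > 0 for all i; (ii) 2 * q i < ∑_j q j for all i; (iii) a i + a j ≥ 0 for all i ≠ j. Then ∑_i q i * a i ≥ 0, and ∑_i q i * a i = 0 holds if and only if a i = 0 for all i. -/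
open Finset in
/-- If `q i > 0`, `2 * q i < ∑ q` for all `i`, and `a i + a j ≥ 0` for all `i ≠ j`,
then `∑ q i * a i ≥ 0`, with equality iff `a = 0`. -/
theorem weighted_sum_nonneg_of_pairwise_sum_nonneg (n : ℕ) (q a : Fin n → ℝ)
    (hq : ∀ i, q i > 0) (hqsum : ∀ i, 2 * q i < ∑ j, q j)
    (ha : ∀ i j, i ≠ j → a i + a j ≥ 0) :
    (∑ i, q i * a i ≥ 0) ∧ ((∑ i, q i * a i = 0) ↔ ∀ i, a i = 0) := by
  have key : (∃ i0, a i0 < 0) → 0 < ∑ i, q i * a i := by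
    rintro ⟨i0, hi0⟩
    have hsplit := Finset.add_sum_erase Finset.univ (fun i => q i * a i)
      (Finset.mem_univ i0)
    rw [← hsplit]
    have hrest : ∑ j ∈ Finset.univ.erase i0, q j * (-a i0)
        ≤ ∑ j ∈ Finset.univ.erase i0, q j * a j := by
      apply Finset.sum_le_sum
      intro j hj
      have hji0 : j ≠ i0 := Finset.ne_of_mem_erase hj
      have := ha j i0 hji0
      have : -a i0 ≤ a j := by linarith
      exact mul_le_mul_of_nonneg_left this (hq j).le
    have hq' : ∑ j ∈ Finset.univ.erase i0, q j = (∑ j, q j) - q i0 := by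
      rw [Finset.sum_erase_eq_sub (Finset.mem_univ i0)]
    have hrest' : ∑ j ∈ Finset.univ.erase i0, q j * (-a i0)
        = ((∑ j, q j) - q i0) * (-a i0) := by
      rw [← Finset.sum_mul, hq']
    have hpos : 0 < ((∑ j, q j) - 2 * q i0) * (-a i0) := by
      have h1 := hqsum i0
      have : 0 < (∑ j, q j) - 2 * q i0 := by linarith
      exact mul_pos this (by linarith)
    nlinarith [hrest, hrest', hpos]
  have nonneg : 0 ≤ ∑ i, q i * a i := by
    by_cases h : ∃ i0, a i0 < 0
    · exact (key h).le
    · push_neg at h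
      exact Finset.sum_nonneg fun i _ => mul_nonneg (hq i).le (h i)
  refine ⟨nonneg, ⟨fun hz i => ?_, fun hz => by simp [hz]⟩⟩
  have hnn : ∀ i, 0 ≤ a i := by
    by_contra h
    push_neg at h
    obtain ⟨i0, hi0⟩ := h
    exact absurd hz (ne_of_gt (key ⟨i0, hi0⟩))
  have := (Finset.sum_eq_zero_iff_of_nonneg
    (fun i _ => mul_nonneg (hq i).le (hnn i))).mp hz i (Finset.mem_univ i)
  have := mul_eq_zero.mp this
  rcases this with h | h
  · exact absurd h (ne_of_gt (hq i))
  · exact h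
end

section
/- Let m be a natural number and R : Fin m → Fin m → ℝ, μ : Fin m → ℝ families of real numbers such that: (i) R i j ≥ 0 and R i j = R j i for all i, j, and R i i = 0 for all i; (ii) μ i ≥ 0 for all i, and μ i * μ j ≤ 1 for all i ≠ j; (iii) ∑_{i,j} (1 − (μ i)^2 * (μ j)^2) * R i j = 0; (iv) for every i, ∑_j R i j > 0; (v) for every k, ∑_{i ≠ k} ∑_{j ≠ k} R i j > 0. Then μ i = 1 for all i. -/
open Finset in
/-- Rigidity in the area-non-increasing case. -/
theorem rigidity_area_nonincreasing (m : ℕ) (R : Fin m → Fin m → ℝ) (μ : Fin m → ℝ)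
    (hR : ∀ i j, R i j ≥ 0) (hRsymm : ∀ i j, R i j = R j i) (hRdiag : ∀ i, R i i = 0)
    (hμ0 : ∀ i, 0 ≤ μ i) (hμ1 : ∀ i j, i ≠ j → μ i * μ j ≤ 1)
    (hvanish : ∑ i, ∑ j, (1 - (μ i) ^ 2 * (μ j) ^ 2) * R i j = 0)
    (hRicci : ∀ i, 0 < ∑ j, R i j)
    (hScal : ∀ k, 0 < ∑ i ∈ univ.filter (· ≠ k), ∑ j ∈ univ.filter (· ≠ k), R i j) :
    ∀ i, μ i = 1 := by
  have hterm : ∀ i j, 0 ≤ (1 - (μ i) ^ 2 * (μ j) ^ 2) * R i j := by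
    intro i j
    rcases eq_or_ne i j with rfl | h
    · simp [hRdiag i]
    · have h1 := hμ1 i j h
      have h2 := mul_nonneg (hμ0 i) (hμ0 j)
      have : (μ i) ^ 2 * (μ j) ^ 2 ≤ 1 := by nlinarith
      exact mul_nonneg (by linarith) (hR i j)
  have hzero : ∀ i j, (1 - (μ i) ^ 2 * (μ j) ^ 2) * R i j = 0 := by
    intro i j
    have houter : ∀ i ∈ Finset.univ, ∑ j, (1 - (μ i) ^ 2 * (μ j) ^ 2) * R i j = 0 := by
      rw [← Finset.sum_eq_zero_iff_of_nonneg]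
      · exact hvanish
      · intro i _
        exact Finset.sum_nonneg fun j _ => hterm i j
    have := houter i (Finset.mem_univ i)
    rw [Finset.sum_eq_zero_iff_of_nonneg (fun j _ => hterm i j)] at this
    exact this j (Finset.mem_univ j)
  have key : ∀ i j, 0 < R i j → μ i * μ j = 1 := by
    intro i j hRij
    have hij : i ≠ j := by
      rintro rfl; rw [hRdiag] at hRij; exact lt_irrefl 0 hRij
    have h := hzero i j
    have hsq : (μ i) ^ 2 * (μ j) ^ 2 = 1 := by
      rcases mul_eq_zero.mp h with h1 | h1
      · linarith
      · exact absurd h1 (ne_of_gt hRij)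
    have h2 := mul_nonneg (hμ0 i) (hμ0 j)
    nlinarith
  have noGt : ∀ k, ¬ (1 < μ k) := by
    intro k hk
    have hlt : ∀ j, j ≠ k → μ j < 1 := by
      intro j hj
      have h1 := hμ1 j k hj
      have := hμ0 j
      nlinarith
    have h1 : ∑ i ∈ univ.filter (· ≠ k), (0:ℝ) <
        ∑ i ∈ univ.filter (· ≠ k), ∑ j ∈ univ.filter (· ≠ k), R i j := by
      simpa using hScal k
    obtain ⟨i, hik, hi⟩ := Finset.exists_lt_of_sum_lt h1
    have h2 : ∑ j ∈ univ.filter (· ≠ k), (0:ℝ) < ∑ j ∈ univ.filter (· ≠ k), R i j := by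
      simpa using hi
    obtain ⟨j, hjk, hj⟩ := Finset.exists_lt_of_sum_lt h2
    simp only [Finset.mem_filter, Finset.mem_univ, true_and] at hik hjk
    have hμij := key i j hj
    have hi1 := hlt i hik
    have hj1 := hlt j hjk
    have := hμ0 i
    have := hμ0 j
    nlinarith
  intro k
  rcases lt_trichotomy (μ k) 1 with h | h | h
  · exfalso
    obtain ⟨j, hj⟩ := Finset.exists_lt_of_sum_lt
      (show ∑ j, (0:ℝ) < ∑ j, R k j by simpa using hRicci k)
    have hRkj : 0 < R k j := hj.2
    have := key k j hRkj
    have hj1 : μ j ≤ 1 := not_lt.mp (noGt j)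
    have := hμ0 j
    have := hμ0 k
    nlinarith
  · exact h
  · exact absurd h (noGt k)
end

section
/- Let m be a natural number, let Q be the quadratic form on Fin m → ℝ given by Q x = −∑_i (x i)^2, and work in the Clifford algebra CliffordAlgebra Q, with c i := ι (e i) the image of the i-th standard basis vector (so c i * c j + c j * c i = −2 if i = j and = 0 otherwise). Let R : Fin m → Fin m → Fin m → Fin m → ℝ satisfy the curvature symmetries R i j k l = −R j i k l, R i j k l = −R i j l k, R i j k l = R k l i j, and the first Bianchi identity R i j k l + R j k i l + R k i j l = 0, and let a : Fin m → ℝ. Then in CliffordAlgebra Q one has ∑_{i,j,k,l} (a i * a j * a k * a l * R i j k l) • (c i * c j * c k * c l) = (2 * ∑_{i,j} (a i)^2 * (a j)^2 * R i j j i) • 1. -/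
/-!
Weighting by `a` is absorbed into the tensor, which keeps all the curvature symmetries. For a
fixed last index, antisymmetry in the first pair and the Bianchi identity make the sum of
`R i j k l • c i c j c k` over the cyclic permutations of `c i c j c k` vanish; as each cyclic
permutation differs from `c i c j c k` only by terms linear in `c`, the triple product
contracts to `2 ∑ R i j i l • c j`. What remains is a quadratic expression `∑ S j l • c j c l`
with the symmetric Ricci coefficients `S`, and of such an expression only the trace survives.
-/

open Finset

theorem CliffordAlgebra.ι_single_mul_add_swap {n K : Type*} [Fintype n] [DecidableEq n]
    [CommRing K] {Q : QuadraticForm K (n → K)} (hQ : ∀ x, Q x = -∑ i, (x i) ^ 2) (i j : n) :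
    ι Q (Pi.single i 1) * ι Q (Pi.single j 1) + ι Q (Pi.single j 1) * ι Q (Pi.single i 1)
      = (if i = j then -2 else 0 : K) • 1 := by
  have hpolar : ∀ x y, QuadraticMap.polar Q x y = -2 * ∑ t, x t * y t := by
    intro x y
    simp only [QuadraticMap.polar, hQ, Pi.add_apply, mul_sum, ← sum_neg_distrib,
      ← sum_sub_distrib]
    exact sum_congr rfl fun t _ => by ring
  have hdot : ∑ t, (Pi.single i 1 : n → K) t * (Pi.single j 1 : n → K) t
      = if i = j then 1 else 0 := by
    simp [Pi.single_apply, eq_comm]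
  rw [ι_mul_ι_add_swap, Algebra.algebraMap_eq_smul_one, hpolar, hdot]
  split_ifs <;> norm_num

structure IsAlgebraicCurvatureTensor {ι K : Type*} [CommRing K] (R : ι → ι → ι → ι → K) :
    Prop where
  antisymm_left : ∀ i j k l, R i j k l = -R j i k l
  antisymm_right : ∀ i j k l, R i j k l = -R i j l k
  pair_symm : ∀ i j k l, R i j k l = R k l i j
  bianchi : ∀ i j k l, R i j k l + R j k i l + R k i j l = 0

theorem IsAlgebraicCurvatureTensor.rescale {ι K : Type*} [CommRing K] {R : ι → ι → ι → ι → K}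
    (hR : IsAlgebraicCurvatureTensor R) (a : ι → K) :
    IsAlgebraicCurvatureTensor fun i j k l => a i * a j * a k * a l * R i j k l where
  antisymm_left i j k l := by
    linear_combination (a i * a j * a k * a l) * hR.antisymm_left i j k l
  antisymm_right i j k l := by
    linear_combination (a i * a j * a k * a l) * hR.antisymm_right i j k l
  pair_symm i j k l := by
    linear_combination (a i * a j * a k * a l) * hR.pair_symm i j k l
  bianchi i j k l := by
    linear_combination (a i * a j * a k * a l) * hR.bianchi i j k l

section Anticommuting

variable {ι K A : Type*} [DecidableEq ι] [Ring A] {c : ι → A}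

theorem mul_mul_add_cyclic_of_anticomm [CommRing K] [Algebra K A]
    (hc : ∀ i j, c i * c j + c j * c i = (if i = j then -2 else 0 : K) • 1) (i j k : ι) :
    c i * c j * c k + c k * c i * c j + c j * c k * c i
      = (3 : K) • (c i * c j * c k) + (if i = j then 2 else 0 : K) • c k
        - (if i = k then 4 else 0 : K) • c j + (if j = k then 2 else 0 : K) • c i := by
  have hki : c k * c i * c j
      = c i * c j * c k + (c i * c k + c k * c i) * c j - c i * (c j * c k + c k * c j) := by
    noncomm_ring
  have hjk : c j * c k * c i
      = c i * c j * c k + c j * (c i * c k + c k * c i) - (c i * c j + c j * c i) * c k := by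
    noncomm_ring
  rw [hki, hjk, hc i k, hc j k, hc i j]
  simp only [smul_mul_assoc, mul_smul_comm, one_mul, mul_one]
  split_ifs <;> subst_vars <;> module

variable [Fintype ι] [Field K] [CharZero K] [Algebra K A]

theorem sum_smul_mul_of_symm
    (hc : ∀ i j, c i * c j + c j * c i = (if i = j then -2 else 0 : K) • 1)
    (S : ι → ι → K) (hS : ∀ i j, S i j = S j i) :
    ∑ i, ∑ j, S i j • (c i * c j) = -(∑ i, S i i) • 1 := by
  apply smul_right_injective A (two_ne_zero (α := K))
  calc (2 : K) • ∑ i, ∑ j, S i j • (c i * c j)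
      = ∑ i, ∑ j, S i j • (c i * c j) + ∑ i, ∑ j, S i j • (c j * c i) := by
        rw [two_smul]
        congr 1
        rw [sum_comm]
        simp only [hS]
    _ = ∑ i, ∑ j, (S i j * if i = j then -2 else 0) • 1 := by
        simp only [← sum_add_distrib, ← smul_add, hc, smul_smul]
    _ = (2 : K) • (-(∑ i, S i i) • 1) := by
        simp only [mul_ite, mul_zero, ite_smul, zero_smul, sum_ite_eq, mem_univ, if_true,
          ← sum_smul, smul_smul]
        rw [← sum_mul]
        congr 1
        ring

theorem sum_smul_mul_mul_of_cyclic
    (hc : ∀ i j, c i * c j + c j * c i = (if i = j then -2 else 0 : K) • 1)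
    (T : ι → ι → ι → K) (hT : ∀ i j k, T i j k = -T j i k)
    (hcyc : ∀ i j k, T i j k + T j k i + T k i j = 0) :
    ∑ i, ∑ j, ∑ k, T i j k • (c i * c j * c k) = (2 : K) • ∑ i, ∑ j, T i j i • c j := by
  set X := ∑ i, ∑ j, ∑ k, T i j k • (c i * c j * c k)
  set Y := ∑ i, ∑ j, T i j i • c j
  have hzero : ∑ i, ∑ j, ∑ k, T i j k • (c i * c j * c k + c k * c i * c j + c j * c k * c i)
      = 0 := by
    have hkij : ∑ i, ∑ j, ∑ k, T i j k • (c k * c i * c j)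
        = ∑ i, ∑ j, ∑ k, T j k i • (c i * c j * c k) :=
      sum_comm_cycle
    have hjki : ∑ i, ∑ j, ∑ k, T i j k • (c j * c k * c i)
        = ∑ i, ∑ j, ∑ k, T k i j • (c i * c j * c k) :=
      sum_comm_cycle.symm
    simp only [smul_add, sum_add_distrib]
    rw [hkij, hjki]
    simp only [← sum_add_distrib, ← add_smul, hcyc, zero_smul, sum_const_zero]
  have hij : ∑ i, ∑ j, ∑ k, T i j k • (if i = j then 2 else 0 : K) • c k = 0 := by
    refine sum_eq_zero fun i _ => sum_eq_zero fun j _ => sum_eq_zero fun k _ => ?_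
    split_ifs with h
    · rw [h, CharZero.eq_neg_self_iff.mp (hT j j k), zero_smul]
    · rw [zero_smul, smul_zero]
  have hijk : ∑ i, ∑ j, ∑ k, T i j k • (3 : K) • (c i * c j * c k) = (3 : K) • X := by
    simp only [X, smul_sum, smul_comm (3 : K)]
  have hik : ∑ i, ∑ j, ∑ k, T i j k • (if i = k then 4 else 0 : K) • c j = (4 : K) • Y := by
    simp only [ite_smul, zero_smul, smul_ite, smul_zero, sum_ite_eq, mem_univ, if_true, Y,
      smul_sum, smul_comm (4 : K)]
  have hjk : ∑ i, ∑ j, ∑ k, T i j k • (if j = k then 2 else 0 : K) • c i = -(2 : K) • Y := by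
    calc ∑ i, ∑ j, ∑ k, T i j k • (if j = k then 2 else 0 : K) • c i
        = ∑ j, ∑ i, T i j j • (2 : K) • c i := by
          simp only [ite_smul, zero_smul, smul_ite, smul_zero, sum_ite_eq, mem_univ, if_true]
          exact sum_comm
      _ = -(2 : K) • Y := by
          simp only [Y, smul_sum]
          refine sum_congr rfl fun j _ => sum_congr rfl fun i _ => ?_
          rw [hT i j j]
          module
  simp only [mul_mul_add_cyclic_of_anticomm hc, smul_add, smul_sub, sum_add_distrib,
    sum_sub_distrib, hij, hijk, hik, hjk] at hzero
  apply smul_right_injective A (three_ne_zero (α := K))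
  linear_combination (norm := module) hzero

theorem IsAlgebraicCurvatureTensor.sum_smul_mul_mul_mul
    (hc : ∀ i j, c i * c j + c j * c i = (if i = j then -2 else 0 : K) • 1)
    {R : ι → ι → ι → ι → K} (hR : IsAlgebraicCurvatureTensor R) :
    ∑ i, ∑ j, ∑ k, ∑ l, R i j k l • (c i * c j * c k * c l)
      = (2 * ∑ i, ∑ j, R i j j i) • 1 := by
  have hcubic : ∀ l, ∑ i, ∑ j, ∑ k, R i j k l • (c i * c j * c k)
      = (2 : K) • ∑ i, ∑ j, R i j i l • c j := fun l =>
    sum_smul_mul_mul_of_cyclic hc (fun i j k => R i j k l)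
      (fun i j k => hR.antisymm_left i j k l) (fun i j k => hR.bianchi i j k l)
  calc ∑ i, ∑ j, ∑ k, ∑ l, R i j k l • (c i * c j * c k * c l)
      = ∑ l, (∑ i, ∑ j, ∑ k, R i j k l • (c i * c j * c k)) * c l := by
        simp only [sum_mul, smul_mul_assoc]
        exact (sum_comm.trans (sum_congr rfl fun _ _ => sum_comm.trans
          (sum_congr rfl fun _ _ => sum_comm))).symm
    _ = (2 : K) • ∑ j, ∑ l, (∑ i, R i j i l) • (c j * c l) := by
        simp only [hcubic, smul_mul_assoc, sum_mul, smul_sum, sum_smul]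
        exact sum_comm_cycle
    _ = (2 : K) • -(∑ j, ∑ i, R i j i j) • 1 := by
        rw [sum_smul_mul_of_symm hc _ fun j l => sum_congr rfl fun i _ => hR.pair_symm i j i l]
    _ = (2 * ∑ i, ∑ j, R i j j i) • 1 := by
        have hscalar : ∑ j, ∑ i, R i j i j = -∑ i, ∑ j, R i j j i := by
          rw [sum_comm]
          simp only [← sum_neg_distrib]
          exact sum_congr rfl fun i _ => sum_congr rfl fun j _ => hR.antisymm_right i j i j
        rw [hscalar, neg_neg, smul_smul]

end Anticommuting

open CliffordAlgebra in
/-- The Clifford-algebra curvature computation (SecondScalarEst): for a quadratic form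
`Q x = -∑ (x i)²` and a tensor `R` with the symmetries of a Riemannian curvature tensor,
`∑ (aᵢ aⱼ aₖ aₗ R i j k l) • cᵢcⱼcₖcₗ = (2 ∑ aᵢ² aⱼ² R i j j i) • 1`. -/
theorem clifford_curvature_contraction (m : ℕ) (Q : QuadraticForm ℝ (Fin m → ℝ))
    (hQ : ∀ x, Q x = -∑ i, (x i) ^ 2)
    (c : Fin m → CliffordAlgebra Q) (hc : ∀ i, c i = ι Q (Pi.single i 1))
    (R : Fin m → Fin m → Fin m → Fin m → ℝ)
    (hR1 : ∀ i j k l, R i j k l = -R j i k l)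
    (hR2 : ∀ i j k l, R i j k l = -R i j l k)
    (hR3 : ∀ i j k l, R i j k l = R k l i j)
    (hBianchi : ∀ i j k l, R i j k l + R j k i l + R k i j l = 0)
    (a : Fin m → ℝ) :
    ∑ i, ∑ j, ∑ k, ∑ l, (a i * a j * a k * a l * R i j k l) • (c i * c j * c k * c l)
      = (2 * ∑ i, ∑ j, (a i) ^ 2 * (a j) ^ 2 * R i j j i) • (1 : CliffordAlgebra Q) := by
  have hanticomm : ∀ i j, c i * c j + c j * c i = (if i = j then -2 else 0 : ℝ) • 1 := fun i j => by
    rw [hc, hc]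
    exact ι_single_mul_add_swap hQ i j
  have hR : IsAlgebraicCurvatureTensor R := ⟨hR1, hR2, hR3, hBianchi⟩
  refine ((hR.rescale a).sum_smul_mul_mul_mul hanticomm).trans ?_
  congr 2
  exact sum_congr rfl fun i _ => sum_congr rfl fun j _ => by ring
end

section
/- Let E be a finite-dimensional real inner product space and A a self-adjoint endomorphism of E. Define a bilinear form ḡ on E by ḡ(v, w) = ⟪exp(A) v, w⟫, and assume that for all v, w ∈ E one has ḡ(v,v) * ḡ(w,w) − ḡ(v,w)^2 ≥ ⟪v,v⟫ * ⟪w,w⟫ − ⟪v,w⟫^2 (the metric ḡ does not decrease areas of 2-vectors relative to the inner product). Then for any nonzero vectors v, w ∈ E with ⟪v, w⟫ = 0, A v = a • v and A w = b • w, one has a + b ≥ 0. -/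
open RealInnerProductSpace

lemma exp_apply_eigen {E : Type*} [NormedAddCommGroup E] [InnerProductSpace ℝ E]
    [FiniteDimensional ℝ E] (A : E →L[ℝ] E) (a : ℝ) (v : E) (hav : A v = a • v) :
    NormedSpace.exp A v = Real.exp a • v := by
  have hpow : ∀ n : ℕ, (A ^ n) v = a ^ n • v := by
    intro n
    induction n with
    | zero => simp
    | succ n ih =>
      rw [pow_succ, ContinuousLinearMap.mul_apply, hav, map_smul, ih, smul_smul,
        pow_succ, mul_comm]
  have hsum := NormedSpace.expSeries_summable' (𝕂 := ℝ) A
  rw [NormedSpace.exp_eq_tsum (𝕂 := ℝ)]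
  rw [← ContinuousLinearMap.apply_apply (𝕜 := ℝ) v]
  rw [show ((fun x => ∑' (n : ℕ), ((n.factorial:ℝ))⁻¹ • x ^ n) A) = ∑' (n : ℕ), ((n.factorial:ℝ))⁻¹ • A ^ n from rfl, (ContinuousLinearMap.apply ℝ E v).map_tsum hsum]
  simp only [ContinuousLinearMap.apply_apply, ContinuousLinearMap.smul_apply, hpow,
    smul_smul]
  have hs : Summable (fun n : ℕ => (n.factorial : ℝ)⁻¹ * a ^ n) := by
    simpa [smul_eq_mul] using NormedSpace.expSeries_summable' (𝕂 := ℝ) a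
  rw [hs.tsum_smul_const]
  congr 1
  rw [Real.exp_eq_exp_ℝ, NormedSpace.exp_eq_tsum (𝕂 := ℝ)]
  simp [smul_eq_mul]

/-- If `ḡ(v,w) = ⟪exp(A) v, w⟫` does not decrease areas of 2-vectors, then the sum of any
two eigenvalues of the self-adjoint endomorphism `A` (on orthogonal eigenvectors) is `≥ 0`. -/
theorem eigenvalue_sum_nonneg_of_area_nondecreasing (E : Type*) [NormedAddCommGroup E]
    [InnerProductSpace ℝ E] [FiniteDimensional ℝ E]
    (A : E →L[ℝ] E) (hA : IsSelfAdjoint A)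
    (gbar : E → E → ℝ) (hgbar : ∀ v w, gbar v w = ⟪NormedSpace.exp A v, w⟫)
    (harea : ∀ v w : E,
      gbar v v * gbar w w - (gbar v w) ^ 2 ≥ ⟪v, v⟫ * ⟪w, w⟫ - ⟪v, w⟫ ^ 2)
    (v w : E) (hv : v ≠ 0) (hw : w ≠ 0) (hvw : ⟪v, w⟫ = 0)
    (a b : ℝ) (hav : A v = a • v) (hbw : A w = b • w) :
    a + b ≥ 0 := by
  have hev := exp_apply_eigen A a v hav
  have hew := exp_apply_eigen A b w hbw
  have h1 : gbar v v = Real.exp a * ⟪v, v⟫ := by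
    rw [hgbar, hev, real_inner_smul_left]
  have h2 : gbar w w = Real.exp b * ⟪w, w⟫ := by
    rw [hgbar, hew, real_inner_smul_left]
  have h3 : gbar v w = 0 := by
    rw [hgbar, hev, real_inner_smul_left, hvw, mul_zero]
  have key := harea v w
  rw [h1, h2, h3, hvw] at key
  have hP : (0:ℝ) < ⟪v, v⟫ := by
    have h := norm_pos_iff.mpr hv
    rw [real_inner_self_eq_norm_sq]; positivity
  have hQ : (0:ℝ) < ⟪w, w⟫ := by
    have h := norm_pos_iff.mpr hw
    rw [real_inner_self_eq_norm_sq]; positivity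
  have hexp : (1:ℝ) ≤ Real.exp a * Real.exp b := by
    nlinarith [key, mul_pos hP hQ]
  rw [← Real.exp_add] at hexp
  exact Real.one_le_exp_iff.mp hexp
end
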